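/- arXiv:1904.00257 — 2 statements merged into one kernel-verified Lean document; each statement's English description precedes it below -/
import Mathlib

section
/- Let r ∈ (0,1) and 0 ≤ a < b. Define G(y) := (y − 2)/(y² − y + 1) + (2/√3)·arctan((2y − 1)/√3) for y ∈ ℝ. Then ∫_a^b (r^z/(r^z + (1−r^z)²))² dz = (1/(3·log r))·[G(r^b) − G(r^a)]. -/
/-! The substitution `y = r ^ z` turns the integrand into `y ^ 2 / (y ^ 2 - y + 1) ^ 2` and
`dz` into `dy / (y log r)`, so it suffices that `G' y = 3 y / (y ^ 2 - y + 1) ^ 2`: completing the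
square, `4 (y ^ 2 - y + 1) = 3 + (2 y - 1) ^ 2`, produces the arctangent term. -/

open Real MeasureTheory intervalIntegral

lemma sq_sub_self_add_one_pos (y : ℝ) : 0 < y ^ 2 - y + 1 := by
  nlinarith [sq_nonneg (2 * y - 1)]

lemma hasDerivAt_sub_two_div (y : ℝ) :
    HasDerivAt (fun y : ℝ => (y - 2) / (y ^ 2 - y + 1))
      ((-y ^ 2 + 4 * y - 1) / (y ^ 2 - y + 1) ^ 2) y := by
  have hq := sq_sub_self_add_one_pos y
  have h : HasDerivAt (fun y : ℝ => (y - 2) / (y ^ 2 - y + 1))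
      ((1 * (y ^ 2 - y + 1) - (y - 2) * (2 * y ^ 1 - 1)) / (y ^ 2 - y + 1) ^ 2) y :=
    ((hasDerivAt_id y).sub_const 2).div
      (((hasDerivAt_pow 2 y).sub (hasDerivAt_id y)).add_const 1) hq.ne'
  refine h.congr_deriv ?_
  ring

lemma hasDerivAt_arctan_two_mul_sub_one_div_sqrt_three (y : ℝ) :
    HasDerivAt (fun y : ℝ => 2 / √3 * arctan ((2 * y - 1) / √3))
      (1 / (y ^ 2 - y + 1)) y := by
  have hinner : HasDerivAt (fun y : ℝ => (2 * y - 1) / √3) (2 / √3) y := by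
    simpa using (((hasDerivAt_id y).const_mul 2).sub_const 1).div_const √3
  refine (((hasDerivAt_arctan _).comp y hinner).const_mul (2 / √3)).congr_deriv ?_
  have hq := sq_sub_self_add_one_pos y
  have h3 : √3 ^ 2 = 3 := sq_sqrt (by norm_num)
  have hsq : 1 + ((2 * y - 1) / √3) ^ 2 = 4 / 3 * (y ^ 2 - y + 1) := by
    rw [div_pow, h3]; ring
  rw [hsq]
  field_simp
  rw [h3]
  ring

lemma hasDerivAt_second_moment_primitive (y : ℝ) :
    HasDerivAt (fun y : ℝ => (y - 2) / (y ^ 2 - y + 1) + 2 / √3 * arctan ((2 * y - 1) / √3))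
      (3 * y / (y ^ 2 - y + 1) ^ 2) y := by
  refine ((hasDerivAt_sub_two_div y).add
    (hasDerivAt_arctan_two_mul_sub_one_div_sqrt_three y)).congr_deriv ?_
  have hq := sq_sub_self_add_one_pos y
  field_simp
  ring

lemma continuous_sq_rpow_div {r : ℝ} (hr : 0 < r) :
    Continuous fun z : ℝ => (r ^ z / (r ^ z + (1 - r ^ z) ^ 2)) ^ 2 := by
  have hc : Continuous fun z : ℝ => r ^ z := continuous_const.rpow continuous_id fun _ => .inl hr.ne'
  refine (hc.div (hc.add ((continuous_const.sub hc).pow 2)) fun z => ?_).pow 2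
  simp only [Pi.add_apply, Pi.sub_apply, Pi.pow_apply]
  nlinarith [sq_sub_self_add_one_pos (r ^ z)]

lemma hasDerivAt_comp_rpow_div_log {F : ℝ → ℝ}
    (hF : ∀ y, 0 < y → HasDerivAt F (3 * y / (y ^ 2 - y + 1) ^ 2) y)
    {r : ℝ} (hr0 : 0 < r) (hr1 : r ≠ 1) (z : ℝ) :
    HasDerivAt (fun z => 1 / (3 * log r) * F (r ^ z))
      ((r ^ z / (r ^ z + (1 - r ^ z) ^ 2)) ^ 2) z := by
  have hlog : log r ≠ 0 := log_ne_zero_of_pos_of_ne_one hr0 hr1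
  have hrz : 0 < r ^ z := rpow_pos_of_pos hr0 z
  have hdenom : r ^ z + (1 - r ^ z) ^ 2 = (r ^ z) ^ 2 - r ^ z + 1 := by ring
  refine (((hF _ hrz).comp z (hasStrictDerivAt_const_rpow hr0 z).hasDerivAt).const_mul
    (1 / (3 * log r))).congr_deriv ?_
  have hq := sq_sub_self_add_one_pos (r ^ z)
  rw [hdenom]
  field_simp

lemma integral_sq_rpow_div_eq {F : ℝ → ℝ}
    (hF : ∀ y, 0 < y → HasDerivAt F (3 * y / (y ^ 2 - y + 1) ^ 2) y)
    {r : ℝ} (hr0 : 0 < r) (hr1 : r ≠ 1) (a b : ℝ) :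
    ∫ z in a..b, (r ^ z / (r ^ z + (1 - r ^ z) ^ 2)) ^ 2
      = 1 / (3 * log r) * (F (r ^ b) - F (r ^ a)) := by
  rw [integral_eq_sub_of_hasDerivAt (fun z _ => hasDerivAt_comp_rpow_div_log hF hr0 hr1 z)
    ((continuous_sq_rpow_div hr0).intervalIntegrable a b)]
  ring

theorem second_moment_uniform_uncertainty_integral_general
    (r a b : ℝ) (hr : r ∈ Set.Ioo (0:ℝ) 1)
    (G : ℝ → ℝ)
    (hG : ∀ y, G y = (y - 2) / (y ^ 2 - y + 1)
      + 2 / Real.sqrt 3 * Real.arctan ((2 * y - 1) / Real.sqrt 3)) :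
    ∫ z in a..b, (r ^ z / (r ^ z + (1 - r ^ z) ^ 2)) ^ 2
      = 1 / (3 * Real.log r) * (G (r ^ b) - G (r ^ a)) := by
  obtain rfl : G = _ := funext hG
  exact integral_sq_rpow_div_eq (fun y _ => hasDerivAt_second_moment_primitive y) hr.1 hr.2.ne a b

/-- For `r ∈ (0,1)`, `0 ≤ a < b` and
`G(y) = (y−2)/(y²−y+1) + (2/√3)arctan((2y−1)/√3)`,
`∫_a^b (r^z/(r^z + (1−r^z)²))² dz = (1/(3 log r))[G(r^b) − G(r^a)]`. -/
theorem second_moment_uniform_uncertainty_integral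
    (r a b : ℝ) (hr : r ∈ Set.Ioo (0:ℝ) 1) (ha : 0 ≤ a) (hab : a < b)
    (G : ℝ → ℝ)
    (hG : ∀ y, G y = (y - 2) / (y ^ 2 - y + 1)
      + 2 / Real.sqrt 3 * Real.arctan ((2 * y - 1) / Real.sqrt 3)) :
    ∫ z in a..b, (r ^ z / (r ^ z + (1 - r ^ z) ^ 2)) ^ 2
      = 1 / (3 * Real.log r) * (G (r ^ b) - G (r ^ a)) :=
  second_moment_uniform_uncertainty_integral_general r a b hr G hG
end

section
/- Let λ > 0, p* > 0, V_∞ ∈ (0,1), C > 0, and set α := 2(1+p*)V_∞/λ, β := 2(1+p*)(1−V_∞)/λ. Define f(v) := C·v^{α−1}(1−v)^{β−1} for v ∈ (0,1). Then f is differentiable on (0,1) and for every v ∈ (0,1): (λ/2)·d/dv[v(1−v)·f(v)] = (1+p*)·(V_∞ − v)·f(v). In other words, f is a stationary solution of the controlled Fokker–Planck equation whose drift is (1+p*)(V_∞ − v). -/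
/-!
On `(0, 1)` the flux `w (1 - w) f(w)` equals `C w^α (1 - w)^β`, whose derivative is
`(α (1 - w) - β w) f(w)`; since `λ α / 2 = (1 + p*) V_∞` and `λ β / 2 = (1 + p*) (1 - V_∞)`,
multiplying by `λ / 2` gives `(1 + p*) (V_∞ - w) f(w)`.
-/

open Real

noncomputable def betaKernel (a b x : ℝ) : ℝ :=
  x ^ (a - 1) * (1 - x) ^ (b - 1)

lemma differentiableAt_betaKernel {a b x : ℝ} (hx : x ∈ Set.Ioo (0 : ℝ) 1) :
    DifferentiableAt ℝ (betaKernel a b) x := by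
  have hx₁ : 1 - x ≠ 0 := (sub_pos.2 hx.2).ne'
  exact (differentiableAt_id.rpow_const (Or.inl hx.1.ne')).mul
    ((differentiableAt_const 1).sub differentiableAt_id |>.rpow_const (Or.inl hx₁))

lemma mul_one_sub_mul_betaKernel {a b x : ℝ} (hx : x ∈ Set.Ioo (0 : ℝ) 1) :
    x * (1 - x) * betaKernel a b x = x ^ a * (1 - x) ^ b := by
  have hx₁ : 0 < 1 - x := sub_pos.2 hx.2
  rw [betaKernel, rpow_sub_one hx.1.ne', rpow_sub_one hx₁.ne']
  field_simp [hx.1.ne', hx₁.ne']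

lemma hasDerivAt_rpow_mul_one_sub_rpow {a b x : ℝ} (hx : x ∈ Set.Ioo (0 : ℝ) 1) :
    HasDerivAt (fun w => w ^ a * (1 - w) ^ b)
      ((a * (1 - x) - b * x) * betaKernel a b x) x := by
  have hx₁ : 0 < 1 - x := sub_pos.2 hx.2
  have hpow : HasDerivAt (fun w => w ^ a) (a * x ^ (a - 1)) x :=
    hasDerivAt_rpow_const (Or.inl hx.1.ne')
  have hpow₁ : HasDerivAt (fun w => (1 - w) ^ b) (b * (1 - x) ^ (b - 1) * (-1)) x :=
    (hasDerivAt_rpow_const (Or.inl hx₁.ne')).comp x ((hasDerivAt_id x).const_sub 1)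
  refine (hpow.mul hpow₁).congr_deriv ?_
  rw [betaKernel, rpow_sub_one hx.1.ne', rpow_sub_one hx₁.ne']
  field_simp [hx.1.ne']
  ring

lemma hasDerivAt_mul_one_sub_mul_betaKernel {a b x : ℝ} (hx : x ∈ Set.Ioo (0 : ℝ) 1) :
    HasDerivAt (fun w => w * (1 - w) * betaKernel a b w)
      ((a * (1 - x) - b * x) * betaKernel a b x) x :=
  (hasDerivAt_rpow_mul_one_sub_rpow hx).congr_of_eventuallyEq <|
    Filter.eventually_of_mem (isOpen_Ioo.mem_nhds hx) fun _ hw => mul_one_sub_mul_betaKernel hw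

theorem controlled_beta_density_stationary_FokkerPlanck_general
    (lam pstar Vinf C : ℝ) (hlam : 0 < lam)
    (f : ℝ → ℝ)
    (hf : ∀ v, f v =
      C * v ^ (2 * (1 + pstar) * Vinf / lam - 1)
        * (1 - v) ^ (2 * (1 + pstar) * (1 - Vinf) / lam - 1)) :
    DifferentiableOn ℝ f (Set.Ioo 0 1) ∧
    ∀ v ∈ Set.Ioo (0:ℝ) 1,
      lam / 2 * deriv (fun w => w * (1 - w) * f w) v
        = (1 + pstar) * ((Vinf - v) * f v) := by
  set α := 2 * (1 + pstar) * Vinf / lam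
  set β := 2 * (1 + pstar) * (1 - Vinf) / lam
  obtain rfl : f = fun w => C * betaKernel α β w := funext fun w => by rw [hf, betaKernel, mul_assoc]
  refine ⟨fun v hv => ((differentiableAt_betaKernel hv).const_mul C).differentiableWithinAt,
    fun v hv => ?_⟩
  have hflux : (fun w => w * (1 - w) * (C * betaKernel α β w))
      = fun w => C * (w * (1 - w) * betaKernel α β w) := by
    funext w; ring
  rw [hflux, ((hasDerivAt_mul_one_sub_mul_betaKernel hv).const_mul C).deriv]
  simp only [α, β]
  field_simp
  ring

/-- The beta-type density `f(v) = C v^{α−1}(1−v)^{β−1}` with `α = 2(1+p*)V_∞/λ`,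
`β = 2(1+p*)(1−V_∞)/λ`, `λ > 0`, `p* > 0`, `V_∞ ∈ (0,1)`, `C > 0`, is differentiable
on `(0,1)` and satisfies the controlled stationary Fokker–Planck equation
`(λ/2) d/dv[v(1−v)f(v)] = (1+p*)(V_∞ − v)f(v)` on `(0,1)`. -/
theorem controlled_beta_density_stationary_FokkerPlanck
    (lam pstar Vinf C : ℝ) (hlam : 0 < lam) (hp : 0 < pstar)
    (hV : Vinf ∈ Set.Ioo (0:ℝ) 1) (hC : 0 < C)
    (f : ℝ → ℝ)
    (hf : ∀ v, f v =
      C * v ^ (2 * (1 + pstar) * Vinf / lam - 1)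
        * (1 - v) ^ (2 * (1 + pstar) * (1 - Vinf) / lam - 1)) :
    DifferentiableOn ℝ f (Set.Ioo 0 1) ∧
    ∀ v ∈ Set.Ioo (0:ℝ) 1,
      lam / 2 * deriv (fun w => w * (1 - w) * f w) v
        = (1 + pstar) * ((Vinf - v) * f v) :=
  controlled_beta_density_stationary_FokkerPlanck_general lam pstar Vinf C hlam f hf
end
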